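/- arXiv:1003.4704 — 5 statements merged into one kernel-verified Lean document; each statement's English description precedes it below -/
import Mathlib

section
/- Let p be an odd prime and let λ be a strict partition. Suppose the strict partition μ is obtained from λ by a finite sequence of p-bar removals (each of type 1, type 2, or type 3), of which exactly a are of type 3, and suppose that no p-bar removal of any type applies to μ. Then there exists a sign ε ∈ {1, −1} such that 2^a · h̄_{λ,p'} ≡ ε · h̄_{μ,p'} (mod p). -/
/-- The multiset of bar lengths of a strict partition, given by its set of parts `X`:
for each part `a`, the row contributes `({1, …, a} ∪ {a + b : b ∈ X, b < a}) \ {a - b : b ∈ X, b < a}`. -/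
def barLengths (X : Finset ℕ) : Multiset ℕ :=
  X.val.bind fun a =>
    (((Finset.Icc 1 a) ∪ (X.filter (· < a)).image (fun b => a + b)) \
      ((X.filter (· < a)).image (fun b => a - b))).val

/-- The product of all bar lengths of the strict partition with parts `X`
that are not divisible by `p`. -/
def barProd' (p : ℕ) (X : Finset ℕ) : ℕ :=
  (Multiset.filter (fun l => ¬ p ∣ l) (barLengths X)).prod

/-- Removal of a `p`-bar of type 1: a part `a > p` with `a - p` not a part is replaced
by `a - p`. -/
def Type1Removal (p : ℕ) (X Y : Finset ℕ) : Prop :=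
  ∃ a ∈ X, p < a ∧ a - p ∉ X ∧ Y = insert (a - p) (X.erase a)

/-- Removal of a `p`-bar of type 2: the part `p` is removed. -/
def Type2Removal (p : ℕ) (X Y : Finset ℕ) : Prop :=
  p ∈ X ∧ Y = X.erase p

/-- Removal of a `p`-bar of type 3: two distinct parts `a`, `b` with `a + b = p`
are removed. -/
def Type3Removal (p : ℕ) (X Y : Finset ℕ) : Prop :=
  ∃ a ∈ X, ∃ b ∈ X, a ≠ b ∧ a + b = p ∧ Y = (X.erase a).erase b

/-- `BarRemovalChain p X Y a` : `Y` is obtained from `X` by a finite sequence of `p`-bar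
removals (of types 1, 2 or 3) of which exactly `a` are of type 3. -/
inductive BarRemovalChain (p : ℕ) : Finset ℕ → Finset ℕ → ℕ → Prop
  | refl (X) : BarRemovalChain p X X 0
  | step1 {X Y Z : Finset ℕ} {a : ℕ} :
      Type1Removal p X Y → BarRemovalChain p Y Z a → BarRemovalChain p X Z a
  | step2 {X Y Z : Finset ℕ} {a : ℕ} :
      Type2Removal p X Y → BarRemovalChain p Y Z a → BarRemovalChain p X Z a
  | step3 {X Y Z : Finset ℕ} {a : ℕ} :
      Type3Removal p X Y → BarRemovalChain p Y Z a → BarRemovalChain p X Z (a + 1)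

/-!
Reduce `h̄_{λ,p'}` modulo `p`. Writing `x'` for `x mod p` if `p ∤ x` and `1` otherwise, the row
of a part `a` contributes `(∏_{x ≤ a} x') · ∏_{b < a} (a + b)' / (a - b)'`. Passing to squares
removes every sign: the squared factor of a pair of parts depends only on their residues mod `p`,
is symmetric, and is inverted when one residue is negated; and `∏_{x ≤ m + p} x' = -∏_{x ≤ m} x'`
by Wilson's theorem. Hence a `p`-bar removal of type 1 or 2 does not change the square, while
removing `a` and `b = p - a` multiplies it by `4`, since `(∏_{x ≤ a} x' · ∏_{x ≤ b} x')² = a²`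
(Wilson again) and `(a - b)² ≡ 4a²`. So `(2^a h̄_{λ,p'})² ≡ h̄_{μ,p'}²`, i.e. they agree up to sign.
-/

open Finset

theorem Function.Periodic.prod_range_add {M : Type*} [CommMonoid M] {f : ℕ → M} {n : ℕ}
    (hf : Function.Periodic f n) (c : ℕ) : ∏ x ∈ range n, f (c + x) = ∏ x ∈ range n, f x := by
  induction c with
  | zero => simp
  | succ c ih =>
    rw [← ih]
    cases n with
    | zero => simp
    | succ m =>
      rw [prod_range_succ, prod_range_succ', add_zero, add_assoc c 1 m, add_comm 1 m]
      congr 1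
      · exact prod_congr rfl fun x _ => by rw [add_assoc, add_comm 1 x]
      · simpa using hf c

theorem Finset.prod_Icc_union_image_add_sdiff_image_sub {K : Type*} [CommGroupWithZero K]
    {f : ℕ → K} (hf : ∀ x, f x ≠ 0) {a : ℕ} {F : Finset ℕ} (hF : ∀ b ∈ F, 0 < b ∧ b < a) :
    ∏ x ∈ (Icc 1 a ∪ F.image (a + ·)) \ F.image (a - ·), f x =
      (∏ x ∈ Icc 1 a, f x) * ∏ b ∈ F, f (a + b) / f (a - b) := by
  have hsub : F.image (a - ·) ⊆ Icc 1 a ∪ F.image (a + ·) := fun x hx => by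
    obtain ⟨b, hb, rfl⟩ := mem_image.1 hx
    have := hF b hb
    exact mem_union_left _ (mem_Icc.2 (by omega))
  have hdisj : Disjoint (Icc 1 a) (F.image (a + ·)) := disjoint_right.2 fun x hx hx' => by
    obtain ⟨b, hb, rfl⟩ := mem_image.1 hx
    have := hF b hb
    simp only [mem_Icc] at hx'
    omega
  have hsubInj : Set.InjOn (a - ·) F := fun b hb c hc h => by
    have := hF b hb; have := hF c hc; simp only at h; omega
  rw [eq_div_of_mul_eq (prod_ne_zero_iff.2 fun x _ => hf x) (prod_sdiff hsub),
    prod_union hdisj, prod_image fun b _ c _ h => add_left_cancel h, prod_image hsubInj,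
    prod_div_distrib, mul_div_assoc]

lemma Int.exists_sign_modEq_of_sq_eq {p : ℕ} [Fact p.Prime] {x y : ℤ}
    (h : (x : ZMod p) ^ 2 = (y : ZMod p) ^ 2) :
    ∃ ε : ℤ, (ε = 1 ∨ ε = -1) ∧ x ≡ ε * y [ZMOD p] := by
  rcases sq_eq_sq_iff_eq_or_eq_neg.1 h with h | h
  · exact ⟨1, .inl rfl, (ZMod.intCast_eq_intCast_iff _ _ _).1 (by push_cast; rw [h, one_mul])⟩
  · exact ⟨-1, .inr rfl, (ZMod.intCast_eq_intCast_iff _ _ _).1 (by push_cast; rw [h, neg_one_mul])⟩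

section

variable {p : ℕ} {X Y : Finset ℕ}

lemma Type1Removal.zero_notMem (h : Type1Removal p X Y) (hX : 0 ∉ X) : 0 ∉ Y := by
  obtain ⟨a, -, hpa, -, rfl⟩ := h
  simp only [mem_insert, not_or]
  exact ⟨by omega, fun h => hX (mem_of_mem_erase h)⟩

lemma Type2Removal.zero_notMem (h : Type2Removal p X Y) (hX : 0 ∉ X) : 0 ∉ Y := by
  obtain ⟨-, rfl⟩ := h
  exact fun h => hX (mem_of_mem_erase h)

lemma Type3Removal.zero_notMem (h : Type3Removal p X Y) (hX : 0 ∉ X) : 0 ∉ Y := by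
  obtain ⟨a, -, b, -, -, -, rfl⟩ := h
  exact fun h => hX (mem_of_mem_erase (mem_of_mem_erase h))

end

section

variable {p : ℕ} [Fact p.Prime]

lemma natCast_ne_zero_of_pos_of_lt {n : ℕ} (h₀ : 0 < n) (hp : n < p) : (n : ZMod p) ≠ 0 := by
  rw [Ne, ZMod.natCast_eq_zero_iff]
  exact Nat.not_dvd_of_pos_of_lt h₀ hp

/-- The residue of a bar length `l` as it enters `h̄_{λ,p'}` modulo `p` is `unitOrOne l`. -/
def unitOrOne (x : ZMod p) : ZMod p := if x = 0 then 1 else x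

lemma unitOrOne_ne_zero (x : ZMod p) : unitOrOne x ≠ 0 := by
  unfold unitOrOne
  split_ifs with hx
  exacts [one_ne_zero, hx]

lemma unitOrOne_zero : unitOrOne (0 : ZMod p) = 1 := if_pos rfl

lemma unitOrOne_of_ne_zero {x : ZMod p} (hx : x ≠ 0) : unitOrOne x = x := if_neg hx

lemma sq_unitOrOne_neg (x : ZMod p) : unitOrOne (-x) ^ 2 = unitOrOne x ^ 2 := by
  by_cases hx : x = 0
  · rw [hx, neg_zero]
  · rw [unitOrOne_of_ne_zero hx, unitOrOne_of_ne_zero (neg_ne_zero.2 hx), neg_sq]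

lemma natCast_prod_filter_not_dvd (m : Multiset ℕ) :
    (((m.filter fun l => ¬ p ∣ l).prod : ℕ) : ZMod p) =
      (m.map fun l : ℕ => unitOrOne (l : ZMod p)).prod := by
  induction m using Multiset.induction with
  | empty => simp
  | cons l m ih =>
    by_cases hl : p ∣ l
    · have : (l : ZMod p) = 0 := (ZMod.natCast_eq_zero_iff l p).2 hl
      rw [Multiset.filter_cons_of_neg m (not_not.2 hl), ih, Multiset.map_cons, Multiset.prod_cons,
        this, unitOrOne_zero, one_mul]
    · have : (l : ZMod p) ≠ 0 := mt (ZMod.natCast_eq_zero_iff l p).1 hl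
      rw [Multiset.filter_cons_of_pos m hl, Multiset.prod_cons, Nat.cast_mul, ih, Multiset.map_cons,
        Multiset.prod_cons, unitOrOne_of_ne_zero this]

variable (p) in
/-- The residue modulo `p` of the `p'`-part of `n!`. -/
def factorialPart (n : ℕ) : ZMod p := ∏ x ∈ range n, unitOrOne ((x + 1 : ℕ) : ZMod p)

lemma factorialPart_add (m n : ℕ) :
    factorialPart p (m + n) =
      factorialPart p m * ∏ x ∈ range n, unitOrOne ((m + x + 1 : ℕ) : ZMod p) :=
  prod_range_add _ m n

lemma factorialPart_pred_prime : factorialPart p (p - 1) = -1 := by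
  have hp := (Fact.out : p.Prime).pos
  have hunit : ∀ x ∈ range (p - 1), unitOrOne ((x + 1 : ℕ) : ZMod p) = ((x + 1 : ℕ) : ZMod p) :=
    fun x hx => unitOrOne_of_ne_zero <|
      natCast_ne_zero_of_pos_of_lt (by omega) (by simp only [mem_range] at hx; omega)
  rw [factorialPart, prod_congr rfl hunit, ← Nat.cast_prod, prod_range_add_one_eq_factorial,
    ZMod.wilsons_lemma]

lemma factorialPart_prime : factorialPart p p = -1 := by
  have hp := (Fact.out : p.Prime).pos
  obtain ⟨m, rfl⟩ : ∃ m, p = m + 1 := ⟨p - 1, by omega⟩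
  have hpred := factorialPart_pred_prime (p := m + 1)
  rw [Nat.add_sub_cancel] at hpred
  rw [factorialPart_add, prod_range_one, hpred]
  simp [unitOrOne_zero]

lemma factorialPart_add_prime (m : ℕ) : factorialPart p (m + p) = -factorialPart p m := by
  have hper : Function.Periodic (fun x : ℕ => unitOrOne ((x + 1 : ℕ) : ZMod p)) p := fun x => by
    simp only [add_right_comm x p, Nat.cast_add (x + 1), ZMod.natCast_self, add_zero]
  rw [factorialPart_add, hper.prod_range_add m, ← factorialPart, factorialPart_prime, mul_neg_one]

lemma sq_factorialPart_mul {a b : ℕ} (h : a + b + 1 = p) :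
    (factorialPart p a * factorialPart p b) ^ 2 = 1 := by
  have hsplit := factorialPart_add (p := p) a b
  have hreflect : (∏ x ∈ range b, unitOrOne ((a + x + 1 : ℕ) : ZMod p)) ^ 2 =
      factorialPart p b ^ 2 := by
    rw [← prod_range_reflect, factorialPart, ← prod_pow, ← prod_pow]
    refine prod_congr rfl fun x hx => ?_
    have hx : x < b := mem_range.1 hx
    have hsum : ((a + (b - 1 - x) + 1 : ℕ) : ZMod p) + ((x + 1 : ℕ) : ZMod p) = 0 := by
      rw [← Nat.cast_add, show a + (b - 1 - x) + 1 + (x + 1) = p by omega, ZMod.natCast_self]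
    rw [eq_neg_of_add_eq_zero_left hsum, sq_unitOrOne_neg]
  rw [mul_pow, ← hreflect, ← mul_pow, ← hsplit, show a + b = p - 1 by omega,
    factorialPart_pred_prime, neg_one_sq]

lemma natCast_barProd' {X : Finset ℕ} (hX : 0 ∉ X) :
    (barProd' p X : ZMod p) = ∏ a ∈ X, factorialPart p a *
      ∏ b ∈ X with b < a, unitOrOne ((a + b : ℕ) : ZMod p) / unitOrOne ((a - b : ℕ) : ZMod p) := by
  rw [barProd', natCast_prod_filter_not_dvd, barLengths, Multiset.map_bind, Multiset.prod_bind]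
  refine prod_congr rfl fun a _ => ?_
  rw [← prod_eq_multiset_prod,
    prod_Icc_union_image_add_sdiff_image_sub (fun _ => unitOrOne_ne_zero _) fun b hb => ?_]
  · congr 1
    rw [factorialPart, ← Ico_add_one_right_eq_Icc, prod_Ico_eq_prod_range, Nat.add_sub_cancel]
    simp only [add_comm 1]
  · obtain ⟨hbX, hba⟩ := mem_filter.1 hb
    exact ⟨Nat.pos_of_ne_zero fun h => hX (h ▸ hbX), hba⟩

def pairWeight (x y : ZMod p) : ZMod p := (unitOrOne (x + y) / unitOrOne (x - y)) ^ 2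

lemma pairWeight_comm (x y : ZMod p) : pairWeight x y = pairWeight y x := by
  rw [pairWeight, pairWeight, div_pow, div_pow, add_comm, ← neg_sub, sq_unitOrOne_neg]

lemma pairWeight_zero_left (y : ZMod p) : pairWeight 0 y = 1 := by
  rw [pairWeight, zero_add, zero_sub, div_pow, sq_unitOrOne_neg,
    div_self (pow_ne_zero 2 (unitOrOne_ne_zero y))]

lemma pairWeight_neg_left_mul (x y : ZMod p) : pairWeight (-x) y * pairWeight x y = 1 := by
  have h₁ := unitOrOne_ne_zero (x + y)
  have h₂ := unitOrOne_ne_zero (x - y)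
  rw [pairWeight, pairWeight, div_pow, div_pow, neg_add_eq_sub, ← neg_sub, sq_unitOrOne_neg,
    ← neg_add', sq_unitOrOne_neg]
  field_simp

variable (p) in
/-- The square of `h̄_{λ,p'}` modulo `p`, as one factor per part and one per pair of parts. -/
def barInvariant (X : Finset ℕ) : ZMod p :=
  (∏ a ∈ X, factorialPart p a ^ 2) *
    ∏ a ∈ X, ∏ b ∈ X, if b < a then pairWeight (a : ZMod p) b else 1

lemma sq_natCast_barProd' {X : Finset ℕ} (hX : 0 ∉ X) :
    (barProd' p X : ZMod p) ^ 2 = barInvariant p X := by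
  rw [natCast_barProd' hX, barInvariant, ← prod_pow, ← prod_mul_distrib]
  refine prod_congr rfl fun a _ => ?_
  rw [mul_pow, ← prod_pow, prod_filter]
  congr 1
  refine prod_congr rfl fun b _ => ?_
  split_ifs with hba
  · rw [pairWeight, Nat.cast_add, Nat.cast_sub hba.le]
  · rfl

lemma barInvariant_insert {a : ℕ} {S : Finset ℕ} (ha : a ∉ S) :
    barInvariant p (insert a S) =
      factorialPart p a ^ 2 * (∏ b ∈ S, pairWeight (a : ZMod p) b) * barInvariant p S := by
  have hpair : ∀ b ∈ S, ((if b < a then pairWeight (a : ZMod p) b else 1) *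
      if a < b then pairWeight (b : ZMod p) a else 1) = pairWeight (a : ZMod p) b := by
    intro b hb
    rcases lt_trichotomy b a with h | rfl | h
    · simp [h, h.not_gt]
    · exact absurd hb ha
    · simp [h, h.not_gt, pairWeight_comm]
  simp only [barInvariant, prod_insert ha, lt_irrefl, if_false, one_mul, prod_mul_distrib]
  rw [← prod_congr rfl hpair, prod_mul_distrib]
  ring

lemma four_mul_sq_factorialPart_mul_pairWeight {a b : ℕ} (ha : 0 < a) (hb : 0 < b) (hab : a ≠ b)
    (h : a + b = p) :
    4 * (factorialPart p a * factorialPart p b) ^ 2 * pairWeight (a : ZMod p) b = 1 := by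
  obtain ⟨c, rfl⟩ : ∃ c, b = c + 1 := ⟨b - 1, by omega⟩
  have hb_neg : ((c + 1 : ℕ) : ZMod p) = -a := by
    rw [eq_neg_iff_add_eq_zero, ← Nat.cast_add, add_comm, h, ZMod.natCast_self]
  have hfb : factorialPart p (c + 1) = factorialPart p c * -a := by
    rw [factorialPart_add, prod_range_one, add_zero,
      unitOrOne_of_ne_zero (natCast_ne_zero_of_pos_of_lt hb (by omega)), hb_neg]
  have hdiff : (a : ZMod p) - ((c + 1 : ℕ) : ZMod p) ≠ 0 := by
    rw [sub_ne_zero, Ne, ZMod.natCast_eq_natCast_iff', Nat.mod_eq_of_lt (by omega),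
      Nat.mod_eq_of_lt (by omega)]
    exact hab
  have hsum : (a : ZMod p) + ((c + 1 : ℕ) : ZMod p) = 0 := by
    rw [← Nat.cast_add, h, ZMod.natCast_self]
  have hpair := sq_factorialPart_mul (p := p) (a := a) (b := c) (by omega)
  rw [pairWeight, hsum, unitOrOne_zero, unitOrOne_of_ne_zero hdiff, hfb]
  rw [hb_neg, sub_neg_eq_add] at hdiff ⊢
  have h2 : (2 : ZMod p) ≠ 0 := left_ne_zero_of_mul (two_mul (a : ZMod p) ▸ hdiff)
  have ha' : (a : ZMod p) ≠ 0 := right_ne_zero_of_mul (two_mul (a : ZMod p) ▸ hdiff)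
  rw [show (factorialPart p a * (factorialPart p c * -a)) ^ 2 =
      (factorialPart p a * factorialPart p c) ^ 2 * a ^ 2 by ring, hpair, ← two_mul]
  field_simp
  norm_num

variable {X Y : Finset ℕ}

lemma Type1Removal.barInvariant_eq (h : Type1Removal p X Y) :
    barInvariant p X = barInvariant p Y := by
  obtain ⟨a, haX, hpa, hnot, rfl⟩ := h
  have hcast : ((a - p : ℕ) : ZMod p) = a := by
    rw [Nat.cast_sub hpa.le, ZMod.natCast_self, sub_zero]
  have hfact : factorialPart p a ^ 2 = factorialPart p (a - p) ^ 2 := by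
    rw [← Nat.sub_add_cancel hpa.le, factorialPart_add_prime, neg_sq, Nat.add_sub_cancel]
  conv_lhs => rw [← insert_erase haX]
  rw [barInvariant_insert (notMem_erase a X),
    barInvariant_insert fun h => hnot (mem_of_mem_erase h), hcast, hfact]

lemma Type2Removal.barInvariant_eq (h : Type2Removal p X Y) :
    barInvariant p X = barInvariant p Y := by
  obtain ⟨hpX, rfl⟩ := h
  conv_lhs => rw [← insert_erase hpX]
  rw [barInvariant_insert (notMem_erase p X), factorialPart_prime, ZMod.natCast_self]
  simp [pairWeight_zero_left]

lemma Type3Removal.barInvariant_eq (h : Type3Removal p X Y) (hX : 0 ∉ X) :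
    4 * barInvariant p X = barInvariant p Y := by
  obtain ⟨a, haX, b, hbX, hab, hsum, rfl⟩ := h
  have hpos : ∀ c ∈ X, 0 < c := fun c hc => Nat.pos_of_ne_zero fun h => hX (h ▸ hc)
  have hbS : b ∉ (X.erase a).erase b := notMem_erase b _
  have haS : a ∉ insert b ((X.erase a).erase b) := by
    rw [insert_erase (mem_erase.2 ⟨hab.symm, hbX⟩)]
    exact notMem_erase a X
  have hb_neg : (b : ZMod p) = -a := by
    rw [eq_neg_iff_add_eq_zero, ← Nat.cast_add, add_comm, hsum, ZMod.natCast_self]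
  have hcancel : ∀ c ∈ (X.erase a).erase b,
      pairWeight (a : ZMod p) c * pairWeight (b : ZMod p) c = 1 := fun c _ => by
    rw [hb_neg, mul_comm, pairWeight_neg_left_mul]
  conv_lhs => rw [← insert_erase haX, ← insert_erase (mem_erase.2 ⟨hab.symm, hbX⟩)]
  rw [barInvariant_insert haS, barInvariant_insert hbS, prod_insert hbS]
  calc 4 * (factorialPart p a ^ 2 * (pairWeight (a : ZMod p) b *
          ∏ c ∈ (X.erase a).erase b, pairWeight (a : ZMod p) c) *
        (factorialPart p b ^ 2 * (∏ c ∈ (X.erase a).erase b, pairWeight (b : ZMod p) c) *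
          barInvariant p ((X.erase a).erase b)))
      = 4 * (factorialPart p a * factorialPart p b) ^ 2 * pairWeight (a : ZMod p) b *
          (∏ c ∈ (X.erase a).erase b, pairWeight (a : ZMod p) c * pairWeight (b : ZMod p) c) *
          barInvariant p ((X.erase a).erase b) := by
        rw [prod_mul_distrib]; ring
    _ = barInvariant p ((X.erase a).erase b) := by
        rw [four_mul_sq_factorialPart_mul_pairWeight (hpos a haX) (hpos b hbX) hab hsum,
          prod_congr rfl hcancel, prod_const_one, one_mul, one_mul]

lemma BarRemovalChain.barInvariant_eq {n : ℕ} (h : BarRemovalChain p X Y n) (hX : 0 ∉ X) :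
    4 ^ n * barInvariant p X = barInvariant p Y := by
  induction h with
  | refl => rw [pow_zero, one_mul]
  | step1 h _ ih => rw [h.barInvariant_eq, ih (h.zero_notMem hX)]
  | step2 h _ ih => rw [h.barInvariant_eq, ih (h.zero_notMem hX)]
  | step3 h _ ih => rw [pow_succ, mul_assoc, h.barInvariant_eq hX, ih (h.zero_notMem hX)]

end

theorem stmt0_general (p : ℕ) (hp : p.Prime)
    (X Y : Finset ℕ) (hX : 0 ∉ X) (hY : 0 ∉ Y) (a : ℕ)
    (hchain : BarRemovalChain p X Y a) :
    ∃ ε : ℤ, (ε = 1 ∨ ε = -1) ∧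
      2 ^ a * (barProd' p X : ℤ) ≡ ε * (barProd' p Y : ℤ) [ZMOD p] := by
  have := Fact.mk hp
  refine Int.exists_sign_modEq_of_sq_eq ?_
  push_cast
  rw [mul_pow, sq_natCast_barProd' hX, sq_natCast_barProd' hY, ← pow_mul, mul_comm a, pow_mul]
  norm_num
  exact hchain.barInvariant_eq hX

theorem stmt0 (p : ℕ) (hp : p.Prime) (hodd : Odd p)
    (X Y : Finset ℕ) (hX : 0 ∉ X) (hY : 0 ∉ Y) (a : ℕ)
    (hchain : BarRemovalChain p X Y a)
    (hY1 : ¬ ∃ Z, Type1Removal p Y Z)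
    (hY2 : ¬ ∃ Z, Type2Removal p Y Z)
    (hY3 : ¬ ∃ Z, Type3Removal p Y Z) :
    ∃ ε : ℤ, (ε = 1 ∨ ε = -1) ∧
      2 ^ a * (barProd' p X : ℤ) ≡ ε * (barProd' p Y : ℤ) [ZMOD p] :=
  stmt0_general p hp X Y hX hY a hchain
end

section
/- Let p be an odd prime and let λ be a strict partition having a part a with a > p such that a − p is not a part of λ. Let μ be the strict partition whose parts are those of λ with the part a replaced by a − p (a p-bar removal of type 1). Then there exists a sign ε ∈ {1, −1} such that h̄_{λ,p'} ≡ ε · h̄_{μ,p'} (mod p). -/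
/-!
Modulo `p`, the square of `h̄_{λ,p'}` is the product of `sqOrOne l` over all bar lengths `l`,
where `sqOrOne x` is `x²` for `x ≠ 0` and `1` for `x = 0`. The row of a part `b` contributes
`∏_{l ≤ b} sqOrOne l · ∏_{c < b} sqOrOne (b + c) / sqOrOne (b - c)`. By Wilson's theorem `sqOrOne`
has product `((p - 1)!)² = 1` over any `p` consecutive integers, so the first factor does not
change when `b` is lowered by `p`; the pair factors depend only on the residues of `b` and `c`, and
are symmetric in them because `sqOrOne` is even. Hence `h̄_{λ,p'}² ≡ h̄_{μ,p'}²`, and in the field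
`ZMod p` this leaves only the two signs.
-/

open Finset

theorem Function.Periodic.prod_Ico_add_eq_prod_range {M : Type*} [CommMonoid M] {f : ℕ → M}
    {a : ℕ} (hf : Function.Periodic f a) (n : ℕ) :
    ∏ l ∈ Ico n (n + a), f l = ∏ l ∈ range a, f l := by
  rw [prod_eq_multiset_prod, prod_eq_multiset_prod, range_val, ← Nat.multiset_Ico_map_mod n a,
    Multiset.map_map]
  exact congrArg _ (Multiset.map_congr rfl fun l _ => (hf.map_mod_nat l).symm)

theorem prod_prod_filter_lt_insert {M : Type*} [CommMonoid M] {t : ℕ → ℕ → M}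
    (ht : ∀ b c, t b c = t c b) {Y : Finset ℕ} {x : ℕ} (hx : x ∉ Y) :
    ∏ b ∈ insert x Y, ∏ c ∈ (insert x Y).filter (· < b), t b c
      = (∏ c ∈ Y, t x c) * ∏ b ∈ Y, ∏ c ∈ Y.filter (· < b), t b c := by
  have hrow : ∀ b, ∏ c ∈ (insert x Y).filter (· < b), t b c
      = (if x < b then t x b else 1) * ∏ c ∈ Y.filter (· < b), t b c := by
    intro b
    rw [filter_insert]
    split_ifs with hxb
    · rw [prod_insert fun h => hx (mem_filter.mp h).1, ht]
    · rw [one_mul]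
  have hsplit : ∏ c ∈ Y, t x c
      = (∏ c ∈ Y.filter (· < x), t x c) * ∏ b ∈ Y, if x < b then t x b else 1 := by
    rw [← prod_filter, ← prod_filter_mul_prod_filter_not Y (· < x)]
    congr 1
    refine prod_congr (filter_congr fun c hc => ?_) fun _ _ => rfl
    have : c ≠ x := fun h => hx (h ▸ hc)
    omega
  rw [prod_insert hx, filter_insert, if_neg (lt_irrefl x), prod_congr rfl fun b _ => hrow b,
    prod_mul_distrib, hsplit, mul_assoc]

def barRow (X : Finset ℕ) (b : ℕ) : Finset ℕ :=
  ((Icc 1 b) ∪ (X.filter (· < b)).image (fun c => b + c)) \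
    ((X.filter (· < b)).image (fun c => b - c))

theorem barLengths_eq_bind_barRow (X : Finset ℕ) :
    barLengths X = X.val.bind fun b => (barRow X b).val := rfl

theorem prod_barRow_mul {M : Type*} [CommMonoid M] (f : ℕ → M) {X : Finset ℕ} (hX : 0 ∉ X)
    (b : ℕ) :
    (∏ l ∈ barRow X b, f l) * ∏ c ∈ X.filter (· < b), f (b - c)
      = (∏ l ∈ Icc 1 b, f l) * ∏ c ∈ X.filter (· < b), f (b + c) := by
  set C := X.filter (· < b)
  have hC : ∀ c ∈ C, 0 < c ∧ c < b := fun c hc => by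
    obtain ⟨hcX, hcb⟩ := mem_filter.mp hc
    exact ⟨Nat.pos_of_ne_zero fun h => hX (h ▸ hcX), hcb⟩
  have hsub : C.image (b - ·) ⊆ Icc 1 b ∪ C.image (b + ·) := by
    intro l hl
    obtain ⟨c, hc, rfl⟩ := mem_image.mp hl
    have := hC c hc
    exact mem_union_left _ (mem_Icc.mpr (by omega))
  have hdisj : Disjoint (Icc 1 b) (C.image (b + ·)) := by
    refine disjoint_right.mpr fun l hl hl' => ?_
    obtain ⟨c, hc, rfl⟩ := mem_image.mp hl
    have := hC c hc
    have := mem_Icc.mp hl'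
    omega
  have hinj_sub : Set.InjOn (b - ·) C := fun c hc c' hc' h => by
    have := hC c hc
    have := hC c' hc'
    simp only at h
    omega
  rw [← prod_image hinj_sub, barRow, prod_sdiff hsub, prod_union hdisj,
    prod_image (add_right_injective b).injOn]

section ZModPrime

variable {p : ℕ}

def sqOrOne (x : ZMod p) : ZMod p := if x = 0 then 1 else x ^ 2

theorem sqOrOne_neg (x : ZMod p) : sqOrOne (-x) = sqOrOne x := by
  simp [sqOrOne]

theorem sqOrOne_ne_zero [Fact p.Prime] (x : ZMod p) : sqOrOne x ≠ 0 := by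
  unfold sqOrOne
  split_ifs with hx
  · exact one_ne_zero
  · exact pow_ne_zero 2 hx

theorem cast_barProd'_sq (X : Finset ℕ) :
    ((barProd' p X : ℕ) : ZMod p) ^ 2
      = ((barLengths X).map fun l : ℕ => sqOrOne (l : ZMod p)).prod := by
  rw [barProd', Nat.cast_multiset_prod, ← Multiset.prod_map_pow]
  conv_rhs => rw [← Multiset.filter_add_not (fun l => ¬ p ∣ l) (barLengths X), Multiset.map_add,
    Multiset.prod_add]
  have hdvd : ((Multiset.filter (fun l => ¬¬ p ∣ l) (barLengths X)).map
      fun l : ℕ => sqOrOne (l : ZMod p)).prod = 1 := by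
    refine Multiset.prod_eq_one fun x hx => ?_
    obtain ⟨l, hl, rfl⟩ := Multiset.mem_map.mp hx
    have : (l : ZMod p) = 0 :=
      (ZMod.natCast_eq_zero_iff l p).mpr (not_not.mp (Multiset.mem_filter.mp hl).2)
    simp [sqOrOne, this]
  rw [hdvd, mul_one]
  refine congrArg _ (Multiset.map_congr rfl fun l hl => ?_)
  have : (l : ZMod p) ≠ 0 := by
    rw [Ne, ZMod.natCast_eq_zero_iff]
    exact (Multiset.mem_filter.mp hl).2
  simp [sqOrOne, this]

theorem prod_Icc_sqOrOne_add [Fact p.Prime] (n : ℕ) :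
    ∏ l ∈ Icc 1 (n + p), sqOrOne (l : ZMod p) = ∏ l ∈ Icc 1 n, sqOrOne (l : ZMod p) := by
  have hperiod : Function.Periodic (fun l : ℕ => sqOrOne (l : ZMod p)) p := fun l => by simp
  have hp := (Fact.out : p.Prime).pos
  have hblock : ∏ l ∈ range p, sqOrOne (l : ZMod p) = 1 := by
    rw [range_eq_Ico, prod_eq_prod_Ico_succ_bot hp]
    have : ∀ l ∈ Ico 1 p, sqOrOne (l : ZMod p) = (l : ZMod p) ^ 2 := fun l hl => by
      have := mem_Ico.mp hl
      have : (l : ZMod p) ≠ 0 := by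
        rw [Ne, ZMod.natCast_eq_zero_iff]
        exact Nat.not_dvd_of_pos_of_lt (by omega) this.2
      simp [sqOrOne, this]
    rw [prod_congr rfl this, prod_pow, ZMod.prod_Ico_one_prime]
    simp [sqOrOne]
  rw [← Ico_add_one_right_eq_Icc, ← Ico_add_one_right_eq_Icc,
    ← prod_Ico_consecutive _ (Nat.le_add_left 1 n) (by omega : n + 1 ≤ n + p + 1),
    show n + p + 1 = n + 1 + p by omega, hperiod.prod_Ico_add_eq_prod_range, hblock, mul_one]

variable (p) in
def barPairFactor [Fact p.Prime] (b c : ℕ) : ZMod p :=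
  sqOrOne ((b : ZMod p) + (c : ZMod p)) / sqOrOne ((b : ZMod p) - (c : ZMod p))

theorem barPairFactor_comm [Fact p.Prime] (b c : ℕ) :
    barPairFactor p b c = barPairFactor p c b := by
  rw [barPairFactor, barPairFactor, add_comm, ← neg_sub, sqOrOne_neg]

theorem barPairFactor_add_right [Fact p.Prime] (b c : ℕ) :
    barPairFactor p (b + p) c = barPairFactor p b c := by
  simp [barPairFactor]

theorem prod_barRow_sqOrOne [Fact p.Prime] {X : Finset ℕ} (hX : 0 ∉ X) (b : ℕ) :
    ∏ l ∈ barRow X b, sqOrOne (l : ZMod p)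
      = (∏ l ∈ Icc 1 b, sqOrOne (l : ZMod p)) * ∏ c ∈ X.filter (· < b), barPairFactor p b c := by
  have hrow := prod_barRow_mul (fun l : ℕ => sqOrOne (l : ZMod p)) hX b
  have hsub : ∀ c ∈ X.filter (· < b),
      sqOrOne ((b - c : ℕ) : ZMod p) = sqOrOne ((b : ZMod p) - (c : ZMod p)) :=
    fun c hc => by rw [Nat.cast_sub (mem_filter.mp hc).2.le]
  simp only [prod_congr rfl hsub, Nat.cast_add] at hrow
  simp only [barPairFactor]
  rw [prod_div_distrib, ← mul_div_assoc, eq_div_iff (prod_ne_zero_iff.mpr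
    fun c _ => sqOrOne_ne_zero _), hrow]

theorem cast_barProd'_sq_eq_prod [Fact p.Prime] {X : Finset ℕ} (hX : 0 ∉ X) :
    ((barProd' p X : ℕ) : ZMod p) ^ 2
      = (∏ b ∈ X, ∏ l ∈ Icc 1 b, sqOrOne (l : ZMod p))
        * ∏ b ∈ X, ∏ c ∈ X.filter (· < b), barPairFactor p b c := by
  rw [cast_barProd'_sq, barLengths_eq_bind_barRow, Multiset.map_bind, Multiset.prod_bind,
    ← prod_mul_distrib, prod_eq_multiset_prod]
  exact congrArg _ (Multiset.map_congr rfl fun b _ => prod_barRow_sqOrOne hX b)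

theorem cast_barProd'_sq_insert [Fact p.Prime] {Y : Finset ℕ} (hY : 0 ∉ Y) {x : ℕ} (hx0 : x ≠ 0)
    (hx : x ∉ Y) :
    ((barProd' p (insert x Y) : ℕ) : ZMod p) ^ 2
      = (∏ l ∈ Icc 1 x, sqOrOne (l : ZMod p)) * (∏ c ∈ Y, barPairFactor p x c)
        * ((barProd' p Y : ℕ) : ZMod p) ^ 2 := by
  have hxY : 0 ∉ insert x Y := by simp [hY, hx0.symm]
  rw [cast_barProd'_sq_eq_prod hxY, cast_barProd'_sq_eq_prod hY, prod_insert hx,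
    prod_prod_filter_lt_insert barPairFactor_comm hx]
  ring

theorem cast_barProd'_sq_insert_add [Fact p.Prime] {Y : Finset ℕ} (hY : 0 ∉ Y) {n : ℕ}
    (hn : n ≠ 0) (hnY : n ∉ Y) (hnpY : n + p ∉ Y) :
    ((barProd' p (insert (n + p) Y) : ℕ) : ZMod p) ^ 2
      = ((barProd' p (insert n Y) : ℕ) : ZMod p) ^ 2 := by
  rw [cast_barProd'_sq_insert hY (by omega) hnpY, cast_barProd'_sq_insert hY hn hnY,
    prod_Icc_sqOrOne_add]
  simp only [barPairFactor_add_right]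

end ZModPrime

theorem stmt1_general (p : ℕ) (hp : p.Prime)
    (X : Finset ℕ) (hX : 0 ∉ X) (a : ℕ) (ha : a ∈ X) (hap : p < a) (hnot : a - p ∉ X) :
    ∃ ε : ℤ, (ε = 1 ∨ ε = -1) ∧
      (barProd' p X : ℤ) ≡ ε * (barProd' p (insert (a - p) (X.erase a)) : ℤ) [ZMOD p] := by
  have := Fact.mk hp
  obtain ⟨n, rfl⟩ : ∃ n, a = n + p := ⟨a - p, by omega⟩
  rw [Nat.add_sub_cancel] at hnot ⊢
  have hsq := cast_barProd'_sq_insert_add (p := p) (fun h => hX (mem_of_mem_erase h))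
    (by omega) (fun h => hnot (mem_of_mem_erase h)) (notMem_erase _ X)
  rw [insert_erase ha] at hsq
  obtain ⟨ε, hε, hεeq⟩ : ∃ ε : ℤ, (ε = 1 ∨ ε = -1) ∧ ((barProd' p X : ℕ) : ZMod p)
      = ε * ((barProd' p (insert n (X.erase (n + p))) : ℕ) : ZMod p) := by
    rcases sq_eq_sq_iff_eq_or_eq_neg.mp hsq with h | h
    · exact ⟨1, by simp [h]⟩
    · exact ⟨-1, by simp [h]⟩
  refine ⟨ε, hε, (ZMod.intCast_eq_intCast_iff _ _ p).mp ?_⟩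
  push_cast
  exact hεeq

theorem stmt1 (p : ℕ) (hp : p.Prime) (hodd : Odd p)
    (X : Finset ℕ) (hX : 0 ∉ X) (a : ℕ) (ha : a ∈ X) (hap : p < a) (hnot : a - p ∉ X) :
    ∃ ε : ℤ, (ε = 1 ∨ ε = -1) ∧
      (barProd' p X : ℤ) ≡ ε * (barProd' p (insert (a - p) (X.erase a)) : ℤ) [ZMOD p] :=
  stmt1_general p hp X hX a ha hap hnot
end

section
/- Let p be an odd prime and let λ be a strict partition having two distinct parts a > b with a + b = p. Let μ be the strict partition whose parts are those of λ with the parts a and b removed (a p-bar removal of type 3). Then there exists a sign ε ∈ {1, −1} such that 2 · h̄_{λ,p'} ≡ ε · h̄_{μ,p'} (mod p). -/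
/-!
Work in `ZMod p`, sending a bar length to its residue when `p` does not divide it and to `1`
otherwise. The row of a part `c` contributes `c!` times `(c + d) / (c - d)` for each smaller
part `d`, since the bar lengths `c - d` are removed from `{1, …, c}` and the `c + d` added.
Removing `a` and `b` leaves the product for `μ` times the rows of `a` and `b`, which give
`a! b! / (a - b) ≡ -a! b! / (2b)`, and one factor for every other part `d` from its pairs with
`a` and `b`. As `a ≡ -b`, the numerators of that factor agree with its denominators up to sign,
so it is `±1`; and Wilson's theorem gives `(p - b)! (b - 1)! ≡ (-1)^b`.
-/

open Finset Nat

section CastUnlessDvd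

variable (p : ℕ)

def castUnlessDvd (x : ℕ) : ZMod p := if p ∣ x then 1 else x

theorem castUnlessDvd_add_self (x : ℕ) : castUnlessDvd p (x + p) = castUnlessDvd p x := by
  simp [castUnlessDvd, Nat.dvd_add_self_right]

theorem castUnlessDvd_self : castUnlessDvd p p = 1 := by simp [castUnlessDvd]

theorem natCast_barProd'_s3 (X : Finset ℕ) :
    (barProd' p X : ZMod p) = ((barLengths X).map (castUnlessDvd p)).prod := by
  unfold barProd'
  induction barLengths X using Multiset.induction with
  | empty => simp
  | cons x s ih => by_cases h : p ∣ x <;> simp [castUnlessDvd, h, ih]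

variable {p}

theorem castUnlessDvd_of_pos_of_lt {x : ℕ} (h0 : 0 < x) (hp : x < p) :
    castUnlessDvd p x = x :=
  if_neg fun h => (Nat.le_of_dvd h0 h).not_gt hp

theorem prod_Icc_castUnlessDvd {c : ℕ} (hc : c < p) :
    ∏ i ∈ Icc 1 c, castUnlessDvd p i = (c ! : ZMod p) := by
  have hi : ∀ i ∈ Icc 1 c, 0 < i ∧ i < p := fun i hi => by
    have := mem_Icc.mp hi
    omega
  rw [prod_congr rfl fun i h => castUnlessDvd_of_pos_of_lt (hi i h).1 (hi i h).2, ← Nat.cast_prod,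
    ← Ico_add_one_right_eq_Icc, prod_Ico_id_eq_factorial]

end CastUnlessDvd

theorem natCast_add_eq_zero {a b p : ℕ} (hsum : a + b = p) : (a : ZMod p) + b = 0 := by
  rw [← Nat.cast_add, hsum, ZMod.natCast_self]

theorem prod_sdiff_mul_prod_sub {M : Type*} [CommMonoid M] (f : ℕ → M) {c : ℕ} {L : Finset ℕ}
    (hL : ∀ d ∈ L, 0 < d ∧ d < c) :
    (∏ x ∈ (Icc 1 c ∪ L.image (c + ·)) \ L.image (c - ·), f x) * ∏ d ∈ L, f (c - d)
      = (∏ i ∈ Icc 1 c, f i) * ∏ d ∈ L, f (c + d) := by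
  have hsub : L.image (c - ·) ⊆ Icc 1 c := by
    simp only [subset_iff, mem_image, mem_Icc]
    rintro _ ⟨d, hd, rfl⟩
    have := hL d hd
    omega
  have hdisj : Disjoint (L.image (c + ·)) (Icc 1 c) := by
    simp only [disjoint_left, mem_image, mem_Icc]
    rintro _ ⟨d, hd, rfl⟩
    have := hL d hd
    omega
  have hsub_inj : Set.InjOn (c - ·) L := fun x hx y hy h => by
    have := hL x hx
    have := hL y hy
    simp only at h
    omega
  rw [union_sdiff_distrib, sdiff_eq_self_of_disjoint (hdisj.mono_right hsub),
    prod_union (hdisj.mono_right sdiff_subset).symm,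
    prod_image fun x _ y _ h => by simpa using h, mul_right_comm,
    ← prod_image hsub_inj, prod_sdiff hsub]

section BarProduct

variable (p : ℕ) [Fact p.Prime]

theorem castUnlessDvd_ne_zero (x : ℕ) : castUnlessDvd p x ≠ 0 := by
  unfold castUnlessDvd
  split_ifs with h
  · exact one_ne_zero
  · rwa [Ne, ZMod.natCast_eq_zero_iff]

noncomputable def pairFactor (c d : ℕ) : ZMod p :=
  if d < c then castUnlessDvd p (c + d) / castUnlessDvd p (c - d) else 1

noncomputable def crossFactor (a b d : ℕ) : ZMod p :=
  pairFactor p a d * pairFactor p d a * (pairFactor p b d * pairFactor p d b)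

variable {p}

theorem pairFactor_of_lt {c d : ℕ} (h : d < c) :
    pairFactor p c d = castUnlessDvd p (c + d) / castUnlessDvd p (c - d) := if_pos h

theorem pairFactor_of_le {c d : ℕ} (h : c ≤ d) : pairFactor p c d = 1 := if_neg h.not_gt

theorem prod_map_barLengths {X : Finset ℕ} (hX : 0 ∉ X) :
    ((barLengths X).map (castUnlessDvd p)).prod
      = ∏ c ∈ X, ((∏ i ∈ Icc 1 c, castUnlessDvd p i) * ∏ d ∈ X, pairFactor p c d) := by
  rw [barLengths, Multiset.map_bind, Multiset.prod_bind, prod_eq_multiset_prod]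
  refine congrArg Multiset.prod (Multiset.map_congr rfl fun c _ => ?_)
  rw [← prod_eq_multiset_prod]
  have hL : ∀ d ∈ X.filter (· < c), 0 < d ∧ d < c := fun d hd => by
    rw [mem_filter] at hd
    exact ⟨Nat.pos_of_ne_zero (ne_of_mem_of_not_mem hd.1 hX), hd.2⟩
  have hden : ∏ d ∈ X.filter (· < c), castUnlessDvd p (c - d) ≠ 0 :=
    prod_ne_zero_iff.mpr fun d _ => castUnlessDvd_ne_zero p _
  simp only [pairFactor]
  rw [← mul_left_inj' hden, prod_sdiff_mul_prod_sub _ hL, ← prod_filter, prod_div_distrib,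
    mul_assoc, div_mul_cancel₀ _ hden]

theorem prod_map_barLengths_insert_insert {Y : Finset ℕ} (hY : 0 ∉ Y) {a b : ℕ} (ha : a ∉ Y)
    (hb : b ∉ Y) (hb0 : 0 < b) (hba : b < a) :
    ((barLengths (insert a (insert b Y))).map (castUnlessDvd p)).prod
      = (∏ i ∈ Icc 1 a, castUnlessDvd p i) * (∏ i ∈ Icc 1 b, castUnlessDvd p i)
          * pairFactor p a b * (∏ d ∈ Y, crossFactor p a b d)
          * ((barLengths Y).map (castUnlessDvd p)).prod := by
  have ha' : a ∉ insert b Y := by simp [hba.ne', ha]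
  have hX : 0 ∉ insert a (insert b Y) := by simp [hY, hb0.ne, (hb0.trans hba).ne]
  rw [prod_map_barLengths hX, prod_map_barLengths hY]
  simp only [prod_insert ha', prod_insert hb, pairFactor_of_le le_rfl, pairFactor_of_le hba.le,
    crossFactor, prod_mul_distrib]
  ring

end BarProduct

section CrossFactor

variable {p : ℕ} [Fact p.Prime] {a b d : ℕ}

theorem crossFactor_eq_one_of_lt_of_lt (hsum : a + b = p) (hdb : d < b) (hba : b < a) :
    crossFactor p a b d = 1 := by
  have key : castUnlessDvd p (a + d) * castUnlessDvd p (b + d)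
      = castUnlessDvd p (a - d) * castUnlessDvd p (b - d) := by
    simp (disch := omega) only [castUnlessDvd_of_pos_of_lt, Nat.cast_add, Nat.cast_sub]
    linear_combination (2 * d : ZMod p) * natCast_add_eq_zero hsum
  rw [crossFactor, pairFactor_of_lt (hdb.trans hba), pairFactor_of_lt hdb,
    pairFactor_of_le (hdb.trans hba).le, pairFactor_of_le hdb.le]
  field_simp [castUnlessDvd_ne_zero]
  linear_combination key

theorem crossFactor_eq_neg_one_of_lt_of_lt (hsum : a + b = p) (hbd : b < d) (hda : d < a) :
    crossFactor p a b d = -1 := by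
  have key : castUnlessDvd p (a + d) * castUnlessDvd p (d + b)
      = -(castUnlessDvd p (a - d) * castUnlessDvd p (d - b)) := by
    rw [show a + d = d - b + p by omega, castUnlessDvd_add_self]
    simp (disch := omega) only [castUnlessDvd_of_pos_of_lt, Nat.cast_add, Nat.cast_sub]
    linear_combination (d - b : ZMod p) * natCast_add_eq_zero hsum
  rw [crossFactor, pairFactor_of_lt hda, pairFactor_of_lt hbd,
    pairFactor_of_le hda.le, pairFactor_of_le hbd.le]
  field_simp [castUnlessDvd_ne_zero]
  linear_combination key

theorem crossFactor_eq_one_of_lt (hsum : a + b = p) (had : a < d) (hba : b < a) :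
    crossFactor p a b d = 1 := by
  have key : castUnlessDvd p (d + a) * castUnlessDvd p (d + b)
      = castUnlessDvd p (d - a) * castUnlessDvd p (d - b) := by
    rw [show d + a = d - b + p by omega, show d + b = d - a + p by omega,
      castUnlessDvd_add_self, castUnlessDvd_add_self, mul_comm]
  rw [crossFactor, pairFactor_of_lt had, pairFactor_of_lt (hba.trans had),
    pairFactor_of_le had.le, pairFactor_of_le (hba.trans had).le]
  field_simp [castUnlessDvd_ne_zero]
  linear_combination key

theorem crossFactor_sq (hsum : a + b = p) (hba : b < a) (hda : d ≠ a) (hdb : d ≠ b) :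
    crossFactor p a b d ^ 2 = 1 := by
  rcases lt_or_gt_of_ne hdb with hdb | hbd
  · simp [crossFactor_eq_one_of_lt_of_lt hsum hdb hba]
  rcases lt_or_gt_of_ne hda with hda | had
  · simp [crossFactor_eq_neg_one_of_lt_of_lt hsum hbd hda]
  · simp [crossFactor_eq_one_of_lt hsum had hba]

end CrossFactor

section Factorials

variable {p : ℕ} [Fact p.Prime]

theorem natCast_factorial_sub_mul_factorial_pred {b : ℕ} (hb : 0 < b) (hbp : b ≤ p) :
    (((p - b)! * (b - 1)! : ℕ) : ZMod p) = (-1) ^ b := by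
  obtain ⟨k, rfl⟩ : ∃ k, b = k + 1 := ⟨b - 1, by omega⟩
  have hdesc := Nat.factorial_mul_descFactorial (n := p - 1) (k := k) (by omega)
  rw [show p - 1 - k = p - (k + 1) by omega] at hdesc
  have hwilson : (((p - (k + 1))! * (p - 1).descFactorial k : ℕ) : ZMod p) = -1 := by
    rw [hdesc, ZMod.wilsons_lemma]
  rw [Nat.cast_mul, ZMod.cast_descFactorial (by omega)] at hwilson
  rw [Nat.add_sub_cancel, Nat.cast_mul]
  have hsq : ((-1 : ZMod p) ^ k) ^ 2 = 1 := by rw [← pow_mul, pow_mul', neg_one_sq, one_pow]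
  linear_combination (-1 : ZMod p) ^ k * hwilson - ((p - (k + 1))! * k ! : ZMod p) * hsq

theorem two_mul_factorial_mul_factorial_mul_pairFactor {a b : ℕ} (hsum : a + b = p)
    (hb : 0 < b) (hba : b < a) :
    2 * ((a ! : ZMod p) * b ! * pairFactor p a b) = (-1) ^ (b + 1) := by
  have hdiff : castUnlessDvd p (a - b) = -(2 * b) := by
    rw [castUnlessDvd_of_pos_of_lt (by omega) (by omega), Nat.cast_sub hba.le]
    linear_combination natCast_add_eq_zero hsum
  have hwilson := natCast_factorial_sub_mul_factorial_pred hb (p := p) (by omega)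
  rw [show p - b = a by omega, Nat.cast_mul] at hwilson
  rw [pairFactor_of_lt hba, hsum, castUnlessDvd_self, ← Nat.mul_factorial_pred hb.ne']
  field_simp [castUnlessDvd_ne_zero]
  rw [hdiff]
  push_cast
  linear_combination (2 * b : ZMod p) * hwilson

end Factorials

theorem two_mul_natCast_barProd'_eq {p : ℕ} [Fact p.Prime] {X : Finset ℕ} (hX : 0 ∉ X)
    {a b : ℕ} (ha : a ∈ X) (hb : b ∈ X) (hba : b < a) (hsum : a + b = p) :
    ∃ u : ZMod p, u ^ 2 = 1 ∧
      2 * (barProd' p X : ZMod p) = u * barProd' p ((X.erase a).erase b) := by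
  set Y := (X.erase a).erase b with hY
  have hXY : X = insert a (insert b Y) := by
    rw [hY, insert_erase (mem_erase.mpr ⟨hba.ne, hb⟩), insert_erase ha]
  have hb0 : 0 < b := Nat.pos_of_ne_zero (ne_of_mem_of_not_mem hb hX)
  have hmemY : ∀ {d}, d ∈ Y → d ≠ b ∧ d ≠ a ∧ d ∈ X := fun hd => by
    simpa only [hY, mem_erase] using hd
  refine ⟨(-1) ^ (b + 1) * ∏ d ∈ Y, crossFactor p a b d, ?_, ?_⟩
  · rw [mul_pow, ← prod_pow, prod_eq_one fun d hd =>
      crossFactor_sq hsum hba (hmemY hd).2.1 (hmemY hd).1, ← pow_mul, pow_mul', neg_one_sq,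
      one_pow, one_mul]
  · rw [natCast_barProd'_s3, natCast_barProd'_s3, hXY,
      prod_map_barLengths_insert_insert (fun h => hX (hmemY h).2.2) (fun h => (hmemY h).2.1 rfl)
        (fun h => (hmemY h).1 rfl) hb0 hba,
      prod_Icc_castUnlessDvd (by omega), prod_Icc_castUnlessDvd (by omega),
      ← two_mul_factorial_mul_factorial_mul_pairFactor hsum hb0 hba]
    ring

theorem stmt3_general (p : ℕ) (hp : p.Prime)
    (X : Finset ℕ) (hX : 0 ∉ X) (a b : ℕ) (ha : a ∈ X) (hb : b ∈ X) (hba : b < a)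
    (hsum : a + b = p) :
    ∃ ε : ℤ, (ε = 1 ∨ ε = -1) ∧
      2 * (barProd' p X : ℤ) ≡ ε * (barProd' p ((X.erase a).erase b) : ℤ) [ZMOD p] := by
  have : Fact p.Prime := ⟨hp⟩
  obtain ⟨u, hu, hkey⟩ := two_mul_natCast_barProd'_eq hX ha hb hba hsum
  rcases sq_eq_one_iff.mp hu with rfl | rfl
  · exact ⟨1, .inl rfl, (ZMod.intCast_eq_intCast_iff _ _ _).mp (by push_cast; exact hkey)⟩
  · exact ⟨-1, .inr rfl, (ZMod.intCast_eq_intCast_iff _ _ _).mp (by push_cast; exact hkey)⟩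

theorem stmt3 (p : ℕ) (hp : p.Prime) (hodd : Odd p)
    (X : Finset ℕ) (hX : 0 ∉ X) (a b : ℕ) (ha : a ∈ X) (hb : b ∈ X) (hba : b < a)
    (hsum : a + b = p) :
    ∃ ε : ℤ, (ε = 1 ∨ ε = -1) ∧
      2 * (barProd' p X : ℤ) ≡ ε * (barProd' p ((X.erase a).erase b) : ℤ) [ZMOD p] :=
  stmt3_general p hp X hX a b ha hb hba hsum
end

section
/- Let p be an odd prime, let λ be a strict partition with set of parts X, and let a ∈ X satisfy a > p and a − p ∉ X. Let μ be the strict partition with set of parts (X \ {a}) ∪ {a − p}. Then the product of all mixed bar lengths of λ not divisible by p is congruent modulo p to the product of all mixed bar lengths of μ not divisible by p (with no sign change). -/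
/-! Adding a part `a` to a set `E` of parts adds exactly the bar lengths `a + b`, `b ∈ E`.
Modulo `p`, the product of the bar lengths prime to `p` depends only on the multiset of their
residues, and `a - p` produces the same residues as `a`. -/

/-- The multiset of mixed bar lengths of a strict partition with set of parts `X`:
the multiset `{b + c : b, c ∈ X, b > c}`. -/
def mixedBarLengths (X : Finset ℕ) : Multiset ℕ :=
  X.val.bind fun a => (X.filter (· < a)).val.map fun b => a + b

/-- The product of all mixed bar lengths of the strict partition with parts `X`
that are not divisible by `p`. -/
def mixedBarProd' (p : ℕ) (X : Finset ℕ) : ℕ :=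
  (Multiset.filter (fun l => ¬ p ∣ l) (mixedBarLengths X)).prod

open Multiset

lemma mixedBarLengths_insert {a : ℕ} {E : Finset ℕ} (ha : a ∉ E) :
    mixedBarLengths (insert a E) = mixedBarLengths E + E.val.map (a + ·) := by
  have hlarger : (E.val.bind fun x => ((if a < x then {a} else 0) : Multiset ℕ).map (x + ·)) =
      (E.val.filter (a < ·)).map (a + ·) := by
    rw [filter_eq_bind, Multiset.map_bind]
    exact Multiset.bind_congr fun x _ => by split <;> simp [Nat.add_comm]
  have hsplit : E.val.filter (a < ·) = E.val.filter (fun x => ¬ x < a) :=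
    filter_congr fun x hx => by grind
  simp only [mixedBarLengths, Finset.filter_val, Finset.insert_val_of_notMem ha, cons_bind,
    filter_cons, lt_irrefl, if_false, Multiset.map_add, Multiset.bind_add, hlarger, hsplit,
    Multiset.map_zero, zero_add]
  rw [← add_assoc, ← Multiset.map_add, add_comm (E.val.filter _), filter_add_not, add_comm]

lemma map_natCast_mixedBarLengths_insert_eq {p a a' : ℕ} {E : Finset ℕ} (ha : a ∉ E)
    (ha' : a' ∉ E) (h : (a : ZMod p) = a') :
    (mixedBarLengths (insert a E)).map (Nat.cast : ℕ → ZMod p) =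
      (mixedBarLengths (insert a' E)).map Nat.cast := by
  simp only [mixedBarLengths_insert ha, mixedBarLengths_insert ha', Multiset.map_add,
    Multiset.map_map, Function.comp_def, Nat.cast_add, h]

lemma prod_filter_not_dvd_modEq_of_map_natCast_eq {p : ℕ} {s t : Multiset ℕ}
    (h : s.map (Nat.cast : ℕ → ZMod p) = t.map Nat.cast) :
    (s.filter (¬ p ∣ ·)).prod ≡ (t.filter (¬ p ∣ ·)).prod [MOD p] := by
  have hresidues (u : Multiset ℕ) :
      (((u.filter (¬ p ∣ ·)).prod : ℕ) : ZMod p) = ((u.map Nat.cast).filter (· ≠ 0)).prod := by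
    rw [Nat.cast_multiset_prod, filter_map]
    congr 2
    exact filter_congr fun l _ => by simp [ZMod.natCast_eq_zero_iff]
  rw [← ZMod.natCast_eq_natCast_iff, hresidues, hresidues, h]

theorem stmt4_general (p : ℕ)
    (X : Finset ℕ) (a : ℕ) (ha : a ∈ X) (hap : p < a) (hnot : a - p ∉ X) :
    (mixedBarProd' p X : ℤ) ≡
      (mixedBarProd' p (insert (a - p) (X.erase a)) : ℤ) [ZMOD p] := by
  have hsub : ((a - p : ℕ) : ZMod p) = a := by
    rw [Nat.cast_sub hap.le, ZMod.natCast_self, sub_zero]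
  refine Int.natCast_modEq_iff.mpr (prod_filter_not_dvd_modEq_of_map_natCast_eq ?_)
  conv_lhs => rw [← Finset.insert_erase ha]
  exact map_natCast_mixedBarLengths_insert_eq (Finset.notMem_erase a X)
    (fun h => hnot (Finset.mem_of_mem_erase h)) hsub.symm

theorem stmt4 (p : ℕ) (hp : p.Prime) (hodd : Odd p)
    (X : Finset ℕ) (hX : 0 ∉ X) (a : ℕ) (ha : a ∈ X) (hap : p < a) (hnot : a - p ∉ X) :
    (mixedBarProd' p X : ℤ) ≡
      (mixedBarProd' p (insert (a - p) (X.erase a)) : ℤ) [ZMOD p] :=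
  stmt4_general p X a ha hap hnot
end

section
/- Let p be an odd prime and let μ be a strict partition to which no p-bar removal of any type applies (that is: μ has no part a with a > p and a − p not a part of μ; p is not a part of μ; and μ has no two distinct parts a, b with a + b = p). Then no bar length of μ is divisible by p; equivalently, h̄_{μ,p'} equals the product of all bar lengths of μ. -/
/-! Since no `p`-bar of type 1 can be removed, the parts are closed under subtracting `p` while
the result stays above `p`; as `p` itself is not a part, every part `a` lies above a part
`a % p ≠ 0`. A bar length `l ≤ a` divisible by `p` would then equal `a - (a - l)`, which is
excluded from the bar lengths of row `a`. A bar length `a + b` divisible by `p` would force the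
residues to satisfy `a % p + b % p = p`, which is a removable `p`-bar of type 3 if they differ and
contradicts the oddness of `p` if they agree. -/

theorem mem_barLengths {X : Finset ℕ} {l : ℕ} :
    l ∈ barLengths X ↔ ∃ a ∈ X, ((1 ≤ l ∧ l ≤ a) ∨ ∃ b ∈ X, b < a ∧ a + b = l) ∧
      ∀ b ∈ X, b < a → a - b ≠ l := by
  simp only [barLengths, Multiset.mem_bind, ← Finset.mem_def, Finset.mem_sdiff, Finset.mem_union,
    Finset.mem_Icc, Finset.mem_image, Finset.mem_filter, not_exists, not_and, and_assoc]

section PBarClosed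

variable {p : ℕ} {X : Finset ℕ} (hclosed : ∀ a ∈ X, p < a → a - p ∈ X)
include hclosed

theorem sub_mul_mem_of_closed {a : ℕ} (ha : a ∈ X) {k : ℕ} (hk : k * p < a) :
    a - k * p ∈ X := by
  induction k with
  | zero => simpa using ha
  | succ k ih =>
    rw [Nat.succ_mul] at hk ⊢
    rw [← Nat.sub_sub]
    exact hclosed _ (ih (by omega)) (by omega)

variable (hpX : p ∉ X) (h0 : 0 ∉ X)
include hpX h0

theorem not_dvd_of_mem_of_closed {a : ℕ} (ha : a ∈ X) : ¬ p ∣ a := by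
  rintro ⟨k, rfl⟩
  have hk : k ≠ 0 := by rintro rfl; exact h0 (by simpa using ha)
  have hp : 0 < p := Nat.pos_of_ne_zero fun h => h0 (by simpa [h] using ha)
  obtain ⟨j, rfl⟩ := Nat.exists_eq_succ_of_ne_zero hk
  have hmem := sub_mul_mem_of_closed hclosed ha (k := j) (by rw [Nat.mul_succ, mul_comm]; omega)
  rw [Nat.mul_succ, mul_comm, Nat.add_sub_cancel_left] at hmem
  exact hpX hmem

theorem mod_mem_of_closed {a : ℕ} (ha : a ∈ X) : a % p ∈ X := by
  have hmod : a % p ≠ 0 := fun h =>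
    not_dvd_of_mem_of_closed hclosed hpX h0 ha (Nat.dvd_of_mod_eq_zero h)
  have hdiv := Nat.div_add_mod a p
  rw [Nat.mod_eq_sub_mul_div, mul_comm]
  exact sub_mul_mem_of_closed hclosed ha (by rw [mul_comm]; omega)

theorem not_dvd_add_of_closed (hodd : Odd p) (hsum : ∀ a ∈ X, ∀ b ∈ X, a ≠ b → a + b ≠ p)
    {a b : ℕ} (ha : a ∈ X) (hb : b ∈ X) : ¬ p ∣ a + b := by
  intro hdvd
  have hp : 0 < p := hodd.pos
  have hra := mod_mem_of_closed hclosed hpX h0 ha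
  have hrb := mod_mem_of_closed hclosed hpX h0 hb
  have hra0 : a % p ≠ 0 := fun h => h0 (h ▸ hra)
  have hrb0 : b % p ≠ 0 := fun h => h0 (h ▸ hrb)
  have hres : p ∣ a % p + b % p := by
    rw [Nat.dvd_iff_mod_eq_zero, ← Nat.add_mod]; exact Nat.mod_eq_zero_of_dvd hdvd
  have hsum_eq : a % p + b % p = p := by
    have := Nat.mod_lt a hp
    have := Nat.mod_lt b hp
    obtain ⟨c, hc⟩ := hres
    rcases c with _ | _ | c
    · omega
    · omega
    · nlinarith
  by_cases hab : a % p = b % p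
  · exact Nat.not_even_iff_odd.mpr hodd ⟨a % p, by omega⟩
  · exact hsum _ hra _ hrb hab hsum_eq

theorem not_dvd_of_mem_barLengths_of_closed (hodd : Odd p)
    (hsum : ∀ a ∈ X, ∀ b ∈ X, a ≠ b → a + b ≠ p) {l : ℕ} (hl : l ∈ barLengths X) : ¬ p ∣ l := by
  obtain ⟨a, ha, hrow | ⟨b, hb, -, rfl⟩, hremoved⟩ := mem_barLengths.mp hl
  · rintro ⟨k, rfl⟩
    have hla : p * k < a := lt_of_le_of_ne hrow.2
      fun h => not_dvd_of_mem_of_closed hclosed hpX h0 ha ⟨k, h.symm⟩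
    have hmem := sub_mul_mem_of_closed hclosed ha (k := k) (by rwa [mul_comm])
    exact hremoved _ hmem (by rw [mul_comm]; omega) (by rw [mul_comm]; omega)
  · exact not_dvd_add_of_closed hclosed hpX h0 hodd hsum ha hb

end PBarClosed

theorem stmt9_general (p : ℕ) (hodd : Odd p) (X : Finset ℕ) (hX : 0 ∉ X)
    (h1 : ¬ ∃ a ∈ X, p < a ∧ a - p ∉ X)
    (h2 : p ∉ X)
    (h3 : ¬ ∃ a ∈ X, ∃ b ∈ X, a ≠ b ∧ a + b = p) :
    (∀ l ∈ barLengths X, ¬ p ∣ l) ∧ barProd' p X = (barLengths X).prod := by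
  push Not at h1 h3
  have key : ∀ l ∈ barLengths X, ¬ p ∣ l :=
    fun _ => not_dvd_of_mem_barLengths_of_closed h1 h2 hX hodd h3
  exact ⟨key, by rw [barProd', Multiset.filter_eq_self.mpr key]⟩

theorem stmt9 (p : ℕ) (hp : p.Prime) (hodd : Odd p) (X : Finset ℕ) (hX : 0 ∉ X)
    (h1 : ¬ ∃ a ∈ X, p < a ∧ a - p ∉ X)
    (h2 : p ∉ X)
    (h3 : ¬ ∃ a ∈ X, ∃ b ∈ X, a ≠ b ∧ a + b = p) :
    (∀ l ∈ barLengths X, ¬ p ∣ l) ∧ barProd' p X = (barLengths X).prod :=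
  stmt9_general p hodd X hX h1 h2 h3
end
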